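/- arXiv:2503.18953 — 4 statements merged into one kernel-verified Lean document; each statement's English description precedes it below -/
import Mathlib

section
/- Let E_1 ≤ ... ≤ E_N be real numbers and β₁ ≥ β₂. Then for every k with 1 ≤ k ≤ N, ∑_{i=1}^k exp(-β₁ E_i)/Z(β₁) ≥ ∑_{i=1}^k exp(-β₂ E_i)/Z(β₂), with equality when k = N. That is, the Gibbs probability vector at inverse temperature β₁ majorizes the one at β₂. -/
/-!
Write `w_β i = exp (-β E_i)`. For `β₂ ≤ β₁` the ratio `w_{β₁} i / w_{β₂} i = exp (-(β₁ - β₂) E_i)` is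
non-increasing in `i`, so after cross-multiplying, every term of `Z_{β₂}(k) (Z_{β₁}(N) - Z_{β₁}(k))`
is dominated by the matching term of `Z_{β₁}(k) (Z_{β₂}(N) - Z_{β₂}(k))`, where `Z_β(k)` is the sum of
the first `k` weights.
-/

open Finset

namespace Finset

variable {ι : Type*}

theorem sum_mul_sum_le_sum_mul_sum_of_cross_le (s t : Finset ι) (f g : ι → ℝ)
    (h : ∀ i ∈ s, ∀ j ∈ t, g i * f j ≤ f i * g j) :
    (∑ i ∈ s, g i) * (∑ j ∈ t, f j) ≤ (∑ i ∈ s, f i) * (∑ j ∈ t, g j) := by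
  rw [sum_mul_sum, sum_mul_sum]
  exact sum_le_sum fun i hi => sum_le_sum fun j hj => h i hi j hj

theorem sum_div_sum_le_sum_div_sum_of_cross_le [DecidableEq ι] {s u : Finset ι} (hsu : s ⊆ u)
    (f g : ι → ℝ) (hf : 0 < ∑ i ∈ u, f i) (hg : 0 < ∑ i ∈ u, g i)
    (h : ∀ i ∈ s, ∀ j ∈ u \ s, g i * f j ≤ f i * g j) :
    (∑ i ∈ s, g i) / (∑ i ∈ u, g i) ≤ (∑ i ∈ s, f i) / (∑ i ∈ u, f i) := by
  rw [div_le_div_iff₀ hg hf, ← sum_sdiff hsu (f := f), ← sum_sdiff hsu (f := g), mul_add, mul_add,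
    mul_comm (∑ i ∈ s, g i) (∑ i ∈ s, f i)]
  exact add_le_add_left (sum_mul_sum_le_sum_mul_sum_of_cross_le s (u \ s) f g h) _

end Finset

theorem Real.exp_neg_mul_mul_exp_neg_mul_le {β₁ β₂ x y : ℝ} (hβ : β₂ ≤ β₁) (hxy : x ≤ y) :
    Real.exp (-β₂ * x) * Real.exp (-β₁ * y) ≤ Real.exp (-β₁ * x) * Real.exp (-β₂ * y) := by
  rw [← Real.exp_add, ← Real.exp_add, Real.exp_le_exp]
  nlinarith

theorem gibbs_majorization_general (N : ℕ) (E : ℕ → ℝ)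
    (hE : ∀ i j, i ≤ j → j < N → E i ≤ E j) (β₁ β₂ : ℝ) (h : β₁ ≥ β₂) :
    (∀ k, 1 ≤ k → k ≤ N →
      (∑ i ∈ Finset.range k, Real.exp (-β₁ * E i)) /
        (∑ i ∈ Finset.range N, Real.exp (-β₁ * E i)) ≥
      (∑ i ∈ Finset.range k, Real.exp (-β₂ * E i)) /
        (∑ i ∈ Finset.range N, Real.exp (-β₂ * E i))) ∧
    (∑ i ∈ Finset.range N, Real.exp (-β₁ * E i)) /
        (∑ i ∈ Finset.range N, Real.exp (-β₁ * E i)) =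
      (∑ i ∈ Finset.range N, Real.exp (-β₂ * E i)) /
        (∑ i ∈ Finset.range N, Real.exp (-β₂ * E i)) := by
  have hZ (β : ℝ) (hN : 0 < N) : 0 < ∑ i ∈ range N, Real.exp (-β * E i) :=
    sum_pos (fun i _ => Real.exp_pos _) (nonempty_range_iff.mpr hN.ne')
  refine ⟨fun k hk hkN => ?_, ?_⟩
  · refine sum_div_sum_le_sum_div_sum_of_cross_le (range_subset_range.mpr hkN) _ _
      (hZ β₁ (by omega)) (hZ β₂ (by omega)) fun i hi j hj => ?_
    simp only [mem_sdiff, mem_range, not_lt] at hi hj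
    exact Real.exp_neg_mul_mul_exp_neg_mul_le h (hE i j (by omega) hj.1)
  · rcases N.eq_zero_or_pos with rfl | hN
    · simp
    · rw [div_self (hZ β₁ hN).ne', div_self (hZ β₂ hN).ne']

theorem gibbs_majorization (N : ℕ) (hN : 1 ≤ N) (E : ℕ → ℝ)
    (hE : ∀ i j, i ≤ j → j < N → E i ≤ E j) (β₁ β₂ : ℝ) (h : β₁ ≥ β₂) :
    (∀ k, 1 ≤ k → k ≤ N →
      (∑ i ∈ Finset.range k, Real.exp (-β₁ * E i)) /
        (∑ i ∈ Finset.range N, Real.exp (-β₁ * E i)) ≥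
      (∑ i ∈ Finset.range k, Real.exp (-β₂ * E i)) /
        (∑ i ∈ Finset.range N, Real.exp (-β₂ * E i))) ∧
    (∑ i ∈ Finset.range N, Real.exp (-β₁ * E i)) /
        (∑ i ∈ Finset.range N, Real.exp (-β₁ * E i)) =
      (∑ i ∈ Finset.range N, Real.exp (-β₂ * E i)) /
        (∑ i ∈ Finset.range N, Real.exp (-β₂ * E i)) :=
  gibbs_majorization_general N E hE β₁ β₂ h
end

section
/- Let x and y be probability vectors of length N (nonnegative entries summing to 1), each sorted in non-increasing order, such that x majorizes y. Then the Shannon entropy satisfies H(x) ≤ H(y), where H(p) = -∑_i p_i log p_i (with the convention 0 log 0 = 0). -/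
/-!
The function `t ↦ t log t` lies above its tangent line at each `yᵢ > 0`, so
`∑ x log x - ∑ y log y ≥ ∑ (log yᵢ + 1)(xᵢ - yᵢ)`. The slopes `log yᵢ + 1` decrease with
`i`, and by Abel summation the right-hand side becomes a combination of the partial-sum
differences `∑_{i<k} (xᵢ - yᵢ) ≥ 0` with nonnegative weights. Indices where `y` vanishes, where
the tangent line does not exist, are cut off first: by majorization `x` vanishes there too.
-/

open Finset Real

lemma tangent_le_mul_log {x y : ℝ} (hx : 0 ≤ x) (hy : 0 < y) :
    y * log y + (log y + 1) * (x - y) ≤ x * log x := by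
  rcases hx.eq_or_lt with rfl | hx
  · nlinarith
  · have hlog : 1 - y / x ≤ log x - log y := by
      rw [← log_div hx.ne' hy.ne', ← inv_div]
      exact one_sub_inv_le_log_of_pos (div_pos hx hy)
    have hmul : x - y ≤ x * (log x - log y) := by
      calc x - y = x * (1 - y / x) := by field_simp
        _ ≤ x * (log x - log y) := mul_le_mul_of_nonneg_left hlog hx.le
    nlinarith

lemma sum_range_mul_nonneg_of_antitone {n : ℕ} {c d : ℕ → ℝ}
    (hc : ∀ i, i + 1 < n → c (i + 1) ≤ c i)
    (hd : ∀ k ≤ n, 0 ≤ ∑ i ∈ range k, d i) (hdn : ∑ i ∈ range n, d i = 0) :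
    0 ≤ ∑ i ∈ range n, c i * d i := by
  have hparts := sum_range_by_parts c d n
  simp only [smul_eq_mul] at hparts
  rw [hparts, hdn, mul_zero, zero_sub, neg_nonneg]
  refine sum_nonpos fun i hi => mul_nonpos_of_nonpos_of_nonneg ?_ (hd _ ?_)
  · linarith [hc i (by grind)]
  · grind

lemma sum_mul_log_le_of_partialSums_le {m : ℕ} {x y : ℕ → ℝ}
    (hx : ∀ i < m, 0 ≤ x i) (hy : ∀ i < m, 0 < y i)
    (hys : ∀ i, i + 1 < m → y (i + 1) ≤ y i)
    (hmaj : ∀ k ≤ m, ∑ i ∈ range k, y i ≤ ∑ i ∈ range k, x i)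
    (hsum : ∑ i ∈ range m, x i = ∑ i ∈ range m, y i) :
    ∑ i ∈ range m, y i * log (y i) ≤ ∑ i ∈ range m, x i * log (x i) := by
  have habel : 0 ≤ ∑ i ∈ range m, (log (y i) + 1) * (x i - y i) := by
    refine sum_range_mul_nonneg_of_antitone (fun i hi => ?_) (fun k hk => ?_) ?_
    · gcongr
      exacts [hy _ hi, hys i hi]
    · rw [sum_sub_distrib, sub_nonneg]
      exact hmaj k hk
    · rw [sum_sub_distrib, hsum, sub_self]
  calc ∑ i ∈ range m, y i * log (y i)
      ≤ ∑ i ∈ range m, y i * log (y i) + ∑ i ∈ range m, (log (y i) + 1) * (x i - y i) :=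
        le_add_of_nonneg_right habel
    _ = ∑ i ∈ range m, (y i * log (y i) + (log (y i) + 1) * (x i - y i)) :=
        sum_add_distrib.symm
    _ ≤ ∑ i ∈ range m, x i * log (x i) := sum_le_sum fun i hi =>
        tangent_le_mul_log (hx i (mem_range.1 hi)) (hy i (mem_range.1 hi))

lemma exists_pos_below_zero_above_of_antitone {N : ℕ} {y : ℕ → ℝ}
    (hy0 : ∀ i < N, 0 ≤ y i)
    (hys : ∀ i j, i ≤ j → j < N → y j ≤ y i) :
    ∃ m ≤ N, (∀ i < m, 0 < y i) ∧ ∀ i, m ≤ i → i < N → y i = 0 := by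
  have hex : ∃ k, k = N ∨ y k = 0 := ⟨N, Or.inl rfl⟩
  have hmN : Nat.find hex ≤ N := Nat.find_min' hex (Or.inl rfl)
  refine ⟨Nat.find hex, hmN, fun i hi => ?_, fun i hmi hiN => ?_⟩
  · have hPi := not_or.1 (Nat.find_min hex hi)
    exact (hy0 i (hi.trans_le hmN)).lt_of_ne' hPi.2
  · rcases Nat.find_spec hex with hm | hm
    · omega
    · exact le_antisymm (hm ▸ hys _ i hmi hiN) (hy0 i hiN)

lemma sum_range_eq_sum_range_of_eq_zero {M : Type*} [AddCommMonoid M] {m N : ℕ} {f : ℕ → M}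
    (hmN : m ≤ N) (hf : ∀ i, m ≤ i → i < N → f i = 0) :
    ∑ i ∈ range m, f i = ∑ i ∈ range N, f i :=
  sum_subset (range_subset_range.2 hmN) fun i hiN him =>
    hf i (not_lt.1 (mem_range.not.1 him)) (mem_range.1 hiN)

theorem majorization_entropy_le_general (N : ℕ) (x y : ℕ → ℝ)
    (hx0 : ∀ i < N, 0 ≤ x i) (hy0 : ∀ i < N, 0 ≤ y i)
    (hx1 : ∑ i ∈ Finset.range N, x i = 1) (hy1 : ∑ i ∈ Finset.range N, y i = 1)
    (hys : ∀ i j, i ≤ j → j < N → y j ≤ y i)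
    (hmaj : ∀ k ≤ N, ∑ i ∈ Finset.range k, y i ≤ ∑ i ∈ Finset.range k, x i) :
    -(∑ i ∈ Finset.range N, x i * Real.log (x i)) ≤
    -(∑ i ∈ Finset.range N, y i * Real.log (y i)) := by
  rw [neg_le_neg_iff]
  obtain ⟨m, hmN, hpos, hzero⟩ := exists_pos_below_zero_above_of_antitone hy0 hys
  have hysum : ∑ i ∈ range m, y i = 1 := hy1 ▸ sum_range_eq_sum_range_of_eq_zero hmN hzero
  have hxsum : ∑ i ∈ range m, x i = 1 := by
    have htail := sum_range_add_sum_Ico x hmN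
    have htail_nonneg : 0 ≤ ∑ i ∈ Ico m N, x i :=
      sum_nonneg fun i hi => hx0 i (mem_Ico.1 hi).2
    linarith [hmaj m hmN]
  have hxzero : ∀ i, m ≤ i → i < N → x i = 0 := by
    have htail : ∑ i ∈ Ico m N, x i = 0 := by linarith [sum_range_add_sum_Ico x hmN]
    intro i hmi hiN
    exact (sum_eq_zero_iff_of_nonneg fun j hj => hx0 j (mem_Ico.1 hj).2).1 htail i
      (mem_Ico.2 ⟨hmi, hiN⟩)
  rw [← sum_range_eq_sum_range_of_eq_zero hmN fun i hmi hiN => by simp [hzero i hmi hiN],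
    ← sum_range_eq_sum_range_of_eq_zero hmN fun i hmi hiN => by simp [hxzero i hmi hiN]]
  exact sum_mul_log_le_of_partialSums_le (fun i hi => hx0 i (hi.trans_le hmN)) hpos
    (fun i hi => hys i (i + 1) i.le_succ (hi.trans_le hmN)) (fun k hk => hmaj k (hk.trans hmN))
    (hxsum.trans hysum.symm)

theorem majorization_entropy_le (N : ℕ) (x y : ℕ → ℝ)
    (hx0 : ∀ i < N, 0 ≤ x i) (hy0 : ∀ i < N, 0 ≤ y i)
    (hx1 : ∑ i ∈ Finset.range N, x i = 1) (hy1 : ∑ i ∈ Finset.range N, y i = 1)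
    (hxs : ∀ i j, i ≤ j → j < N → x j ≤ x i)
    (hys : ∀ i j, i ≤ j → j < N → y j ≤ y i)
    (hmaj : ∀ k ≤ N, ∑ i ∈ Finset.range k, y i ≤ ∑ i ∈ Finset.range k, x i) :
    -(∑ i ∈ Finset.range N, x i * Real.log (x i)) ≤
    -(∑ i ∈ Finset.range N, y i * Real.log (y i)) :=
  majorization_entropy_le_general N x y hx0 hy0 hx1 hy1 hys hmaj
end

section
/- Let a_1,...,a_N be positive reals and t ≥ 1. Then for every k with 1 ≤ k ≤ N, (∑_{i=1}^k a_i^t)/(∑_{i=1}^N a_i^t) ≥ (∑_{i=1}^k a_i)/(∑_{i=1}^N a_i), provided a_1 ≥ a_2 ≥ ... ≥ a_N. -/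
/-
Write `S = A + B` and `T = C + D` for the sums of the `a i` and of the `a i ^ t`, split into
the first `k` terms and the rest. The claim `A / S ≤ C / T` is equivalent to the cross inequality
`A * D ≤ C * B`, which holds term by term: for `i < k ≤ j` we have `a j ≤ a i`, hence
`a i * a j ^ t ≤ a i ^ t * a j` because `x ↦ x ^ (t - 1)` is monotone.
-/

open Finset

lemma Real.mul_rpow_le_rpow_mul {x y t : ℝ} (hy : 0 ≤ y) (hyx : y ≤ x) (ht : 1 ≤ t) :
    x * y ^ t ≤ x ^ t * y := by
  have hx : 0 ≤ x := hy.trans hyx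
  have split : ∀ z : ℝ, 0 ≤ z → z ^ t = z * z ^ (t - 1) := fun z hz => by
    rw [← Real.rpow_one_add' hz (by linarith), add_sub_cancel]
  calc x * y ^ t = x * y * y ^ (t - 1) := by rw [split y hy, mul_assoc]
    _ ≤ x * y * x ^ (t - 1) := by gcongr
    _ = x ^ t * y := by rw [split x hx]; ring

lemma div_add_le_div_add {a b c d : ℝ} (hab : 0 < a + b) (hcd : 0 < c + d)
    (h : a * d ≤ c * b) : a / (a + b) ≤ c / (c + d) := by
  rw [div_le_div_iff₀ hab hcd]
  linarith [mul_comm a c]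

lemma Finset.sum_mul_sum_le_sum_mul_sum {ι R : Type*} [NonUnitalNonAssocSemiring R]
    [PartialOrder R] [IsOrderedAddMonoid R] {s u : Finset ι} {f g : ι → R}
    (h : ∀ i ∈ s, ∀ j ∈ u, f i * g j ≤ g i * f j) :
    (∑ i ∈ s, f i) * ∑ j ∈ u, g j ≤ (∑ i ∈ s, g i) * ∑ j ∈ u, f j := by
  simp_rw [sum_mul_sum]
  exact sum_le_sum fun i hi => sum_le_sum fun j hj => h i hi j hj

lemma Finset.sum_range_div_le_sum_range_div {f g : ℕ → ℝ} {k N : ℕ} (hkN : k ≤ N)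
    (hf : 0 < ∑ i ∈ range N, f i) (hg : 0 < ∑ i ∈ range N, g i)
    (h : ∀ i < k, ∀ j, k ≤ j → j < N → f i * g j ≤ g i * f j) :
    (∑ i ∈ range k, f i) / ∑ i ∈ range N, f i ≤
      (∑ i ∈ range k, g i) / ∑ i ∈ range N, g i := by
  rw [← sum_range_add_sum_Ico _ hkN] at hf hg ⊢
  rw [← sum_range_add_sum_Ico _ hkN]
  refine div_add_le_div_add hf hg (sum_mul_sum_le_sum_mul_sum fun i hi j hj => ?_)
  rw [mem_Ico] at hj
  exact h i (mem_range.mp hi) j hj.1 hj.2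

theorem power_majorization (N : ℕ) (a : ℕ → ℝ) (ha : ∀ i < N, 0 < a i)
    (hsorted : ∀ i j, i ≤ j → j < N → a j ≤ a i) (t : ℝ) (ht : 1 ≤ t)
    (k : ℕ) (hk1 : 1 ≤ k) (hkN : k ≤ N) :
    (∑ i ∈ Finset.range k, a i ^ t) / (∑ i ∈ Finset.range N, a i ^ t) ≥
    (∑ i ∈ Finset.range k, a i) / (∑ i ∈ Finset.range N, a i) := by
  have hN : (range N).Nonempty := nonempty_range_iff.mpr (by omega)
  refine sum_range_div_le_sum_range_div hkN
    (sum_pos (fun i hi => ha i (mem_range.mp hi)) hN)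
    (sum_pos (fun i hi => Real.rpow_pos_of_pos (ha i (mem_range.mp hi)) t) hN)
    fun i hik j hkj hjN => ?_
  exact Real.mul_rpow_le_rpow_mul (ha j hjN).le (hsorted i j (by omega) hjN) ht
end

section
/- Let p_1,...,p_N and q_1,...,q_N be positive reals with ∑ p_i = ∑ q_i = 1, both sorted decreasingly, such that the likelihood ratios p_i/q_i are non-increasing in i. Then p majorizes q. -/
/-!
Fix `k ≥ 1` and take the threshold `c = p (k-1) / q (k-1)`. Since the ratios decrease,
`p i ≥ c q i` on the first `k` indices and `p i ≤ c q i` on the rest. If `c ≥ 1` the first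
inequality already gives `∑_{i<k} q i ≤ ∑_{i<k} p i`; if `c < 1` the second shows that `p` puts
less mass than `q` on the tail, and equal totals give the same conclusion.
-/

open Finset

theorem sum_le_sum_of_mul_le_of_le_mul {R ι : Type*} [CommRing R] [LinearOrder R]
    [IsStrictOrderedRing R] {s t : Finset ι} {p q : ι → R} {c : R}
    (hqs : ∀ i ∈ s, 0 ≤ q i) (hqt : ∀ i ∈ t, 0 ≤ q i)
    (hs : ∀ i ∈ s, c * q i ≤ p i) (ht : ∀ i ∈ t, p i ≤ c * q i)
    (htot : ∑ i ∈ s, p i + ∑ i ∈ t, p i = ∑ i ∈ s, q i + ∑ i ∈ t, q i) :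
    ∑ i ∈ s, q i ≤ ∑ i ∈ s, p i := by
  have head : c * ∑ i ∈ s, q i ≤ ∑ i ∈ s, p i := by
    rw [mul_sum]; exact sum_le_sum hs
  have tail : ∑ i ∈ t, p i ≤ c * ∑ i ∈ t, q i := by
    rw [mul_sum]; exact sum_le_sum ht
  rcases le_or_gt 1 c with hc | hc
  · calc ∑ i ∈ s, q i ≤ c * ∑ i ∈ s, q i := le_mul_of_one_le_left (sum_nonneg hqs) hc
      _ ≤ ∑ i ∈ s, p i := head
  · have shrink : c * ∑ i ∈ t, q i ≤ ∑ i ∈ t, q i := mul_le_of_le_one_left (sum_nonneg hqt) hc.le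
    linarith

theorem sum_range_le_sum_range_of_antitoneOn_div {K : Type*} [Field K] [LinearOrder K]
    [IsStrictOrderedRing K] {N k : ℕ} {p q : ℕ → K} (hq : ∀ i < N, 0 < q i)
    (hratio : AntitoneOn (fun i => p i / q i) (Set.Iio N))
    (htot : ∑ i ∈ range N, p i = ∑ i ∈ range N, q i) (hk : k ≤ N) :
    ∑ i ∈ range k, q i ≤ ∑ i ∈ range k, p i := by
  obtain _ | j := k
  · simp
  have hjN : j < N := hk
  refine sum_le_sum_of_mul_le_of_le_mul (t := Ico (j + 1) N) (c := p j / q j)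
    (fun i hi => (hq i ((mem_range.1 hi).trans_le hk)).le)
    (fun i hi => (hq i (mem_Ico.1 hi).2).le) (fun i hi => ?_) (fun i hi => ?_) ?_
  · have hiN : i < N := (mem_range.1 hi).trans_le hk
    rw [← le_div_iff₀ (hq i hiN)]
    exact hratio hiN hjN (Nat.lt_succ_iff.1 (mem_range.1 hi))
  · obtain ⟨hji, hiN⟩ := mem_Ico.1 hi
    rw [← div_le_iff₀ (hq i hiN)]
    exact hratio hjN hiN (Nat.le_of_succ_le hji)
  · rwa [sum_range_add_sum_Ico _ hk, sum_range_add_sum_Ico _ hk]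

theorem likelihood_ratio_implies_majorization_general (N : ℕ) (p q : ℕ → ℝ)
    (hq : ∀ i < N, 0 < q i)
    (hp1 : ∑ i ∈ Finset.range N, p i = 1) (hq1 : ∑ i ∈ Finset.range N, q i = 1)
    (hratio : ∀ i, i + 1 < N → p (i + 1) / q (i + 1) ≤ p i / q i) :
    (∀ k ≤ N, ∑ i ∈ Finset.range k, q i ≤ ∑ i ∈ Finset.range k, p i) ∧
    ∑ i ∈ Finset.range N, p i = ∑ i ∈ Finset.range N, q i := by
  have htot := hp1.trans hq1.symm
  have hanti : AntitoneOn (fun i => p i / q i) (Set.Iio N) :=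
    antitoneOn_of_add_one_le Set.ordConnected_Iio fun i _ _ hi => hratio i hi
  exact ⟨fun k hk => sum_range_le_sum_range_of_antitoneOn_div hq hanti htot hk, htot⟩

theorem likelihood_ratio_implies_majorization (N : ℕ) (p q : ℕ → ℝ)
    (hp : ∀ i < N, 0 < p i) (hq : ∀ i < N, 0 < q i)
    (hp1 : ∑ i ∈ Finset.range N, p i = 1) (hq1 : ∑ i ∈ Finset.range N, q i = 1)
    (hps : ∀ i j, i ≤ j → j < N → p j ≤ p i)
    (hqs : ∀ i j, i ≤ j → j < N → q j ≤ q i)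
    (hratio : ∀ i, i + 1 < N → p (i + 1) / q (i + 1) ≤ p i / q i) :
    (∀ k ≤ N, ∑ i ∈ Finset.range k, q i ≤ ∑ i ∈ Finset.range k, p i) ∧
    ∑ i ∈ Finset.range N, p i = ∑ i ∈ Finset.range N, q i :=
  likelihood_ratio_implies_majorization_general N p q hq hp1 hq1 hratio
end
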